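/- arXiv:2505.04848 — 3 statements merged into one kernel-verified Lean document; each statement's English description precedes it below -/
import Mathlib

section
/- Let k be an algebraically closed field and let A be a nontrivial finitely generated commutative k-algebra. The following are equivalent: (1) the prime spectrum of A consists of exactly one point; (2) A is a local ring; (3) A is a local ring that is finite-dimensional as a k-vector space; (4) A has a unique prime ideal, and this prime ideal is nilpotent. -/
/-!
In a Jacobson ring every prime is an intersection of maximal ideals, so a local Jacobson ring has
dimension zero: its maximal ideal is its only prime, hence equals the nilradical, which is
nilpotent because a finitely generated `k`-algebra is Noetherian. A Noetherian ring of dimension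
zero is Artinian, and an Artinian finitely generated algebra over a field is finite over it
(Zariski's lemma).
-/

theorem Ring.KrullDimLE.zero_of_isJacobsonRing_of_isLocalRing (R : Type*) [CommRing R]
    [IsJacobsonRing R] [IsLocalRing R] : Ring.KrullDimLE 0 R :=
  .mk₀ fun I hI => by
    rw [← IsJacobsonRing.out' I hI.isRadical, IsLocalRing.jacobson_eq_maximalIdeal I hI.ne_top]
    exact IsLocalRing.maximalIdeal.isMaximal R

theorem Module.finite_of_isLocalRing_of_isJacobsonRing (k A : Type*) [Field k] [CommRing A]
    [Algebra k A] [Algebra.FiniteType k A] [IsJacobsonRing A] [IsLocalRing A] :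
    Module.Finite k A :=
  have := Ring.KrullDimLE.zero_of_isJacobsonRing_of_isLocalRing A
  have := Algebra.FiniteType.isNoetherianRing k A
  have : IsArtinianRing A := isArtinianRing_iff_isNoetherianRing_krullDimLE_zero.mpr ⟨‹_›, ‹_›⟩
  Module.finite_of_isArtinianRing k A

theorem IsLocalRing.isNilpotent_maximalIdeal_of_isJacobsonRing (R : Type*) [CommRing R]
    [IsNoetherianRing R] [IsJacobsonRing R] [IsLocalRing R] :
    IsNilpotent (IsLocalRing.maximalIdeal R) :=
  have := Ring.KrullDimLE.zero_of_isJacobsonRing_of_isLocalRing R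
  Ring.KrullDimLE.nilradical_eq_maximalIdeal R ▸ IsNoetherianRing.isNilpotent_nilradical R

theorem stmt8_general (k A : Type*) [Field k] [CommRing A]
    [Algebra k A] [Algebra.FiniteType k A] :
    List.TFAE
      [∃ x : PrimeSpectrum A, ∀ y : PrimeSpectrum A, y = x,
        IsLocalRing A,
        IsLocalRing A ∧ FiniteDimensional k A,
        ∃ P : Ideal A, P.IsPrime ∧ IsNilpotent P ∧ ∀ Q : Ideal A, Q.IsPrime → Q = P] := by
  have := Algebra.FiniteType.isNoetherianRing k A
  have : IsJacobsonRing A := isJacobsonRing_of_finiteType (A := k)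
  tfae_have 1 → 2
  | ⟨x, hx⟩ => (((Ring.krullDimLE_zero_and_isLocalRing_tfae A).out 1 0 rfl rfl).mp
      ⟨x.asIdeal, x.isPrime, fun Q hQ => congrArg PrimeSpectrum.asIdeal (hx ⟨Q, hQ⟩)⟩).2
  tfae_have 2 → 3 := fun _ => ⟨‹_›, Module.finite_of_isLocalRing_of_isJacobsonRing k A⟩
  tfae_have 3 → 2 := And.left
  tfae_have 2 → 4 := fun _ =>
    have := Ring.KrullDimLE.zero_of_isJacobsonRing_of_isLocalRing A
    ⟨_, (IsLocalRing.maximalIdeal.isMaximal A).isPrime,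
      IsLocalRing.isNilpotent_maximalIdeal_of_isJacobsonRing A,
      fun Q _ => Ring.KrullDimLE.eq_maximalIdeal_of_isPrime Q⟩
  tfae_have 4 → 1
  | ⟨P, hP, _, hunique⟩ => ⟨⟨P, hP⟩, fun y => PrimeSpectrum.ext (hunique y.asIdeal y.isPrime)⟩
  tfae_finish

/-- For a nontrivial finitely generated commutative algebra `A` over an algebraically closed
field `k`, the following are equivalent:
(1) `Spec A` has exactly one point;
(2) `A` is a local ring;
(3) `A` is a local ring of finite length, i.e. finite-dimensional over `k`;
(4) `A` has a unique prime ideal and this prime ideal is nilpotent. -/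
theorem stmt8 (k A : Type*) [Field k] [IsAlgClosed k] [CommRing A] [Nontrivial A]
    [Algebra k A] [Algebra.FiniteType k A] :
    List.TFAE
      [∃ x : PrimeSpectrum A, ∀ y : PrimeSpectrum A, y = x,
        IsLocalRing A,
        IsLocalRing A ∧ FiniteDimensional k A,
        ∃ P : Ideal A, P.IsPrime ∧ IsNilpotent P ∧ ∀ Q : Ideal A, Q.IsPrime → Q = P] :=
  stmt8_general k A
end

section
/- Let k be a field, H a commutative Hopf algebra over k, and A a right H-comodule algebra with structure map ρ : A → A ⊗_k H. Regard A ⊗_k H as a right A-module via (x ⊗ h)·a = Σ x·a₍₀₎ ⊗ h·a₍₁₎ (Sweedler notation ρ(a) = Σ a₍₀₎ ⊗ a₍₁₎) and as a right H-comodule via id_A ⊗ Δ. Then there exists a total integral φ : H → A if and only if there exists a k-linear map ψ : A ⊗_k H → A that is simultaneously a morphism of right A-modules and of right H-comodules and satisfies ψ ∘ ρ = id_A. -/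
/-!
For `f : H →ₗ H` let `twist ρ f : A ⊗ H → A ⊗ H` send `a ⊗ h` to `∑ a₀ ⊗ f(a₁) h`.
Coassociativity and counitality of `ρ` make `f ↦ twist ρ f` multiplicative from the convolution
monoid of `H` to `End (A ⊗ H)`, so the Galois map `twist ρ id : a ⊗ h ↦ ρ(a)(1 ⊗ h)` is invertible,
with inverse `twist ρ S`. Given a total integral `φ`, the map `ψ = μ ∘ (id ⊗ φ) ∘ twist ρ S`, that
is `ψ(a ⊗ h) = ∑ a₀ φ(S(a₁) h)`, satisfies `ψ(ρ(x)(1 ⊗ h)) = x φ(h)`. Since the elements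
`ρ(x)(1 ⊗ h)` span `A ⊗ H`, the properties required of `ψ` reduce to those of `φ`.
Conversely, `h ↦ ψ(1 ⊗ h)` is a total integral.
-/

open TensorProduct LinearMap Coalgebra WithConv

namespace ComoduleAlgebra

variable {k H A : Type*} [CommSemiring k] [CommSemiring H] [CommSemiring A] [Algebra k A]

section Bialgebra

variable [Bialgebra k H] (ρ : A →ₐ[k] A ⊗[k] H)

noncomputable def twist (f : H →ₗ[k] H) : A ⊗[k] H →ₗ[k] A ⊗[k] H :=
  lTensor A (mul' k H ∘ₗ rTensor H f) ∘ₗ (TensorProduct.assoc k A H H).toLinearMap ∘ₗ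
    rTensor H ρ.toLinearMap

theorem twist_tmul (f : H →ₗ[k] H) (a : A) (h : H) :
    twist ρ f (a ⊗ₜ h) = lTensor A f (ρ a) * (1 ⊗ₜ h) := by
  simp only [twist, coe_comp, Function.comp_apply, rTensor_tmul, AlgHom.toLinearMap_apply,
    LinearEquiv.coe_coe]
  induction ρ a using TensorProduct.induction_on with
  | zero => simp
  | tmul x y => simp
  | add x y hx hy => simp [add_tmul, hx, hy, add_mul]

theorem twist_id_tmul (a : A) (h : H) : twist ρ LinearMap.id (a ⊗ₜ h) = ρ a * (1 ⊗ₜ h) := by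
  rw [twist_tmul, lTensor_id, id_apply]

theorem twist_mul_one_tmul (f : H →ₗ[k] H) (z : A ⊗[k] H) (h : H) :
    twist ρ f (z * (1 ⊗ₜ h)) = twist ρ f z * (1 ⊗ₜ h) := by
  induction z using TensorProduct.induction_on with
  | zero => simp
  | tmul x y => simp [twist_tmul, mul_assoc]
  | add x y hx hy => simp [hx, hy, add_mul]

theorem twist_comp_lTensor (f g : H →ₗ[k] H) :
    twist ρ f ∘ₗ lTensor A g = lTensor A (mul' k H ∘ₗ map f g) ∘ₗ
      (TensorProduct.assoc k A H H).toLinearMap ∘ₗ rTensor H ρ.toLinearMap := by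
  refine TensorProduct.ext' fun a h => ?_
  simp only [twist, coe_comp, Function.comp_apply, rTensor_tmul, lTensor_tmul,
    AlgHom.toLinearMap_apply, LinearEquiv.coe_coe]
  induction ρ a using TensorProduct.induction_on with
  | zero => simp
  | tmul x y => simp
  | add x y hx hy => simp [hx, hy, add_tmul]

theorem twist_algHom_mul (f : H →ₐ[k] H) (z w : A ⊗[k] H) :
    twist ρ f.toLinearMap (z * w) = twist ρ f.toLinearMap z * twist ρ f.toLinearMap w := by
  have h : twist ρ f.toLinearMap = (Algebra.TensorProduct.lift
      ((Algebra.TensorProduct.map (AlgHom.id k A) f).comp ρ) Algebra.TensorProduct.includeRight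
      fun _ _ => .all _ _).toLinearMap :=
    TensorProduct.ext' fun a h => by rw [twist_tmul]; rfl
  simp only [h, AlgHom.toLinearMap_apply, map_mul]

theorem assoc_symm_lTensor_comul_mul (z w : A ⊗[k] H) :
    (TensorProduct.assoc k A H H).symm (lTensor A (comul (R := k)) (z * w)) =
      (TensorProduct.assoc k A H H).symm (lTensor A (comul (R := k)) z) *
        (TensorProduct.assoc k A H H).symm (lTensor A (comul (R := k)) w) :=
  map_mul ((Algebra.TensorProduct.assoc k k k A H H).symm.toAlgHom.comp
    (Algebra.TensorProduct.map (AlgHom.id k A) (Bialgebra.comulAlgHom k H))) z w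

theorem rTensor_rTensor_coaction_mul_assoc_symm (φ : H →ₗ[k] A) (ψ : A ⊗[k] H →ₗ[k] A)
    (hψ : ∀ x h, ψ (ρ x * (1 ⊗ₜ h)) = x * φ h) (w : A ⊗[k] H) (u : H ⊗[k] H) :
    rTensor H ψ (rTensor H ρ.toLinearMap w * (TensorProduct.assoc k A H H).symm (1 ⊗ₜ u)) =
      w * rTensor H φ u := by
  induction w using TensorProduct.induction_on with
  | zero => simp
  | add w w' hw hw' => simp only [map_add, add_mul, hw, hw']
  | tmul x y =>
    induction u using TensorProduct.induction_on with
    | zero => simp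
    | add u u' hu hu' => simp only [tmul_add, map_add, mul_add, hu, hu']
    | tmul h g => simp [hψ]

theorem mul'_lTensor_mul_tmul_one (φ : H →ₗ[k] A) (w : A ⊗[k] H) (a : A) :
    mul' k A (lTensor A φ (w * (a ⊗ₜ 1))) = mul' k A (lTensor A φ w) * a := by
  induction w using TensorProduct.induction_on with
  | zero => simp
  | add w w' hw hw' => simp only [add_mul, map_add, hw, hw']
  | tmul x h => simp [mul_right_comm]

variable
    (hcoassoc : (TensorProduct.assoc k A H H).toLinearMap ∘ₗ rTensor H ρ.toLinearMap ∘ₗ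
      ρ.toLinearMap = lTensor A (comul (R := k)) ∘ₗ ρ.toLinearMap)
    (hcounit : (TensorProduct.rid k A).toLinearMap ∘ₗ lTensor A (counit (R := k)) ∘ₗ
      ρ.toLinearMap = LinearMap.id)

include hcoassoc in
theorem twist_comp_lTensor_comp_coaction (f g : H →ₗ[k] H) :
    twist ρ f ∘ₗ lTensor A g ∘ₗ ρ.toLinearMap =
      lTensor A (toConv f * toConv g).ofConv ∘ₗ ρ.toLinearMap := by
  rw [← comp_assoc, twist_comp_lTensor, comp_assoc, comp_assoc, hcoassoc]
  simp only [LinearMap.convMul_def, ofConv_toConv, lTensor_comp, comp_assoc]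

include hcounit in
theorem lTensor_convOne_coaction (a : A) :
    lTensor A (1 : WithConv (H →ₗ[k] H)).ofConv (ρ a) = a ⊗ₜ 1 := by
  have h := congr((TensorProduct.rid k A).symm ($hcounit a))
  simp only [coe_comp, Function.comp_apply, LinearEquiv.coe_coe, LinearEquiv.symm_apply_apply,
    AlgHom.toLinearMap_apply, id_apply, rid_symm_apply] at h
  rw [LinearMap.convOne_def, ofConv_toConv, lTensor_comp, comp_apply, h, lTensor_tmul,
    Algebra.linearMap_apply, map_one]

include hcoassoc in
theorem twist_convMul (f g : H →ₗ[k] H) :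
    twist ρ (toConv f * toConv g).ofConv = twist ρ f ∘ₗ twist ρ g := by
  refine TensorProduct.ext' fun a h => ?_
  rw [comp_apply, twist_tmul, twist_tmul, twist_mul_one_tmul]
  congr 1
  exact congr($(twist_comp_lTensor_comp_coaction ρ hcoassoc f g) a).symm

include hcounit in
theorem twist_convOne : twist ρ (1 : WithConv (H →ₗ[k] H)).ofConv = LinearMap.id := by
  refine TensorProduct.ext' fun a h => ?_
  rw [twist_tmul, lTensor_convOne_coaction ρ hcounit, Algebra.TensorProduct.tmul_mul_tmul,
    one_mul, mul_one, id_apply]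

noncomputable def integralOfRetraction (ψ : A ⊗[k] H →ₗ[k] A) : H →ₗ[k] A :=
  ψ ∘ₗ TensorProduct.mk k A H 1

theorem integralOfRetraction_apply_one (ψ : A ⊗[k] H →ₗ[k] A)
    (hψ : ψ ∘ₗ ρ.toLinearMap = LinearMap.id) : integralOfRetraction ψ 1 = 1 := by
  simpa [integralOfRetraction, Algebra.TensorProduct.one_def] using congr($hψ 1)

theorem integralOfRetraction_comodule (ψ : A ⊗[k] H →ₗ[k] A)
    (hψ : ρ.toLinearMap ∘ₗ ψ = rTensor H ψ ∘ₗ (TensorProduct.assoc k A H H).symm.toLinearMap ∘ₗ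
      lTensor A (comul (R := k))) :
    ρ.toLinearMap ∘ₗ integralOfRetraction ψ =
      rTensor H (integralOfRetraction ψ) ∘ₗ comul (R := k) := by
  ext h
  rw [integralOfRetraction, ← comp_assoc, hψ]
  simp only [coe_comp, Function.comp_apply, mk_apply, lTensor_tmul, LinearEquiv.coe_coe]
  induction comul (R := k) h using TensorProduct.induction_on with
  | zero => simp
  | add u u' hu hu' => simp only [tmul_add, map_add, hu, hu']
  | tmul g g' => simp

end Bialgebra

section HopfAlgebra

variable [HopfAlgebra k H] (ρ : A →ₐ[k] A ⊗[k] H)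

noncomputable def retractionOfIntegral (φ : H →ₗ[k] A) : A ⊗[k] H →ₗ[k] A :=
  mul' k A ∘ₗ lTensor A φ ∘ₗ twist ρ (HopfAlgebra.antipode k)

theorem retractionOfIntegral_apply (φ : H →ₗ[k] A) (z : A ⊗[k] H) :
    retractionOfIntegral ρ φ z = mul' k A (lTensor A φ (twist ρ (HopfAlgebra.antipode k) z)) :=
  rfl

variable
    (hcoassoc : (TensorProduct.assoc k A H H).toLinearMap ∘ₗ rTensor H ρ.toLinearMap ∘ₗ
      ρ.toLinearMap = lTensor A (comul (R := k)) ∘ₗ ρ.toLinearMap)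
    (hcounit : (TensorProduct.rid k A).toLinearMap ∘ₗ lTensor A (counit (R := k)) ∘ₗ
      ρ.toLinearMap = LinearMap.id)
include hcoassoc hcounit

theorem twist_antipode_comp_twist_id :
    twist ρ (HopfAlgebra.antipode k) ∘ₗ twist ρ LinearMap.id = LinearMap.id := by
  rw [← twist_convMul ρ hcoassoc, antipode_mul_id, twist_convOne ρ hcounit]

theorem twist_id_comp_twist_antipode :
    twist ρ LinearMap.id ∘ₗ twist ρ (HopfAlgebra.antipode k) = LinearMap.id := by
  rw [← twist_convMul ρ hcoassoc, id_mul_antipode, twist_convOne ρ hcounit]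

theorem twist_antipode_coaction_mul (x : A) (h : H) :
    twist ρ (HopfAlgebra.antipode k) (ρ x * (1 ⊗ₜ h)) = x ⊗ₜ h := by
  rw [← twist_id_tmul, ← comp_apply, twist_antipode_comp_twist_id ρ hcoassoc hcounit, id_apply]

theorem retractionOfIntegral_coaction_mul (φ : H →ₗ[k] A) (x : A) (h : H) :
    retractionOfIntegral ρ φ (ρ x * (1 ⊗ₜ h)) = x * φ h := by
  rw [retractionOfIntegral_apply, twist_antipode_coaction_mul ρ hcoassoc hcounit, lTensor_tmul,
    mul'_apply]

theorem retractionOfIntegral_comp_coaction (φ : H →ₗ[k] A) (hφ : φ 1 = 1) :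
    retractionOfIntegral ρ φ ∘ₗ ρ.toLinearMap = LinearMap.id := by
  ext a
  rw [comp_apply, AlgHom.toLinearMap_apply, ← mul_one (ρ a), Algebra.TensorProduct.one_def,
    retractionOfIntegral_coaction_mul ρ hcoassoc hcounit, hφ, mul_one, id_apply]

theorem retractionOfIntegral_mul_coaction (φ : H →ₗ[k] A) (z : A ⊗[k] H) (a : A) :
    retractionOfIntegral ρ φ (z * ρ a) = retractionOfIntegral ρ φ z * a := by
  have hρa : twist ρ (HopfAlgebra.antipode k) (ρ a) = a ⊗ₜ 1 := by
    rw [← twist_antipode_coaction_mul ρ hcoassoc hcounit a 1, ← Algebra.TensorProduct.one_def,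
      mul_one]
  rw [retractionOfIntegral_apply, retractionOfIntegral_apply,
    ← HopfAlgebra.toLinearMap_antipodeAlgHom, twist_algHom_mul,
    HopfAlgebra.toLinearMap_antipodeAlgHom, hρa, mul'_lTensor_mul_tmul_one]

theorem retractionOfIntegral_comodule (φ : H →ₗ[k] A)
    (hφ : ρ.toLinearMap ∘ₗ φ = rTensor H φ ∘ₗ comul (R := k)) :
    ρ.toLinearMap ∘ₗ retractionOfIntegral ρ φ = rTensor H (retractionOfIntegral ρ φ) ∘ₗ
      (TensorProduct.assoc k A H H).symm.toLinearMap ∘ₗ lTensor A (comul (R := k)) := by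
  have hcoassoc' (x : A) : (TensorProduct.assoc k A H H).symm (lTensor A comul (ρ x)) =
      rTensor H ρ.toLinearMap (ρ x) := by
    rw [LinearEquiv.symm_apply_eq]
    exact congr($hcoassoc.symm x)
  have on_galois : (ρ.toLinearMap ∘ₗ retractionOfIntegral ρ φ) ∘ₗ twist ρ LinearMap.id =
      (rTensor H (retractionOfIntegral ρ φ) ∘ₗ (TensorProduct.assoc k A H H).symm.toLinearMap ∘ₗ
        lTensor A (comul (R := k))) ∘ₗ twist ρ LinearMap.id := by
    refine TensorProduct.ext' fun x h => ?_
    simp only [coe_comp, Function.comp_apply, twist_id_tmul, LinearEquiv.coe_coe,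
      AlgHom.toLinearMap_apply]
    rw [retractionOfIntegral_coaction_mul ρ hcoassoc hcounit, map_mul,
      assoc_symm_lTensor_comul_mul, hcoassoc', lTensor_tmul,
      rTensor_rTensor_coaction_mul_assoc_symm ρ φ _
        (retractionOfIntegral_coaction_mul ρ hcoassoc hcounit φ)]
    exact congr(ρ x * $hφ h)
  rw [← comp_id (_ ∘ₗ retractionOfIntegral ρ φ), ← twist_id_comp_twist_antipode ρ hcoassoc hcounit,
    ← comp_assoc, on_galois, comp_assoc, twist_id_comp_twist_antipode ρ hcoassoc hcounit, comp_id]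

end HopfAlgebra

end ComoduleAlgebra

/-- Let `H` be a commutative Hopf algebra over a field `k` and `A` a right `H`-comodule algebra
with structure map `ρ : A → A ⊗ H`.  Then there exists a total integral `φ : H → A`
(a unital `H`-comodule map) if and only if there exists a `k`-linear map `ψ : A ⊗ H → A` which
is a morphism of right `A`-modules and of right `H`-comodules and satisfies `ψ ∘ ρ = id`. -/
theorem stmt10 (k H A : Type*) [Field k] [CommRing H] [HopfAlgebra k H]
    [CommRing A] [Algebra k A]
    (ρ : A →ₐ[k] A ⊗[k] H)
    (hcoassoc : (TensorProduct.assoc k A H H).toLinearMap ∘ₗ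
        (LinearMap.rTensor H ρ.toLinearMap) ∘ₗ ρ.toLinearMap
      = (LinearMap.lTensor A (Coalgebra.comul (R := k))) ∘ₗ ρ.toLinearMap)
    (hcounit : (TensorProduct.rid k A).toLinearMap ∘ₗ
        (LinearMap.lTensor A (Coalgebra.counit (R := k))) ∘ₗ ρ.toLinearMap = LinearMap.id) :
    (∃ φ : H →ₗ[k] A, φ 1 = 1 ∧
        ρ.toLinearMap ∘ₗ φ = (LinearMap.rTensor H φ) ∘ₗ (Coalgebra.comul (R := k))) ↔
    (∃ ψ : A ⊗[k] H →ₗ[k] A,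
        (∀ (z : A ⊗[k] H) (a : A), ψ (z * ρ a) = ψ z * a) ∧
        (ρ.toLinearMap ∘ₗ ψ = (LinearMap.rTensor H ψ) ∘ₗ
          (TensorProduct.assoc k A H H).symm.toLinearMap ∘ₗ
          (LinearMap.lTensor A (Coalgebra.comul (R := k)))) ∧
        ψ ∘ₗ ρ.toLinearMap = LinearMap.id) := by
  constructor
  · rintro ⟨φ, hφ₁, hφ⟩
    exact ⟨ComoduleAlgebra.retractionOfIntegral ρ φ,
      ComoduleAlgebra.retractionOfIntegral_mul_coaction ρ hcoassoc hcounit φ,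
      ComoduleAlgebra.retractionOfIntegral_comodule ρ hcoassoc hcounit φ hφ,
      ComoduleAlgebra.retractionOfIntegral_comp_coaction ρ hcoassoc hcounit φ hφ₁⟩
  · rintro ⟨ψ, -, hψ, hψρ⟩
    exact ⟨ComoduleAlgebra.integralOfRetraction ψ,
      ComoduleAlgebra.integralOfRetraction_apply_one ρ ψ hψρ,
      ComoduleAlgebra.integralOfRetraction_comodule ρ ψ hψ⟩
end

section
/- Let k be a field, H a commutative Hopf algebra over k, A a right H-comodule algebra with structure map ρ : A → A ⊗_k H, and B := A^{coH} its coinvariant subalgebra. Suppose there exists a total integral φ : H → A. Then for every B-module M, the map M → (M ⊗_B A)^{coH} sending m ↦ m ⊗ 1 is an isomorphism of B-modules. -/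
open TensorProduct

/-- The coinvariant subalgebra `B = A^{coH} = {a ∈ A : ρ a = a ⊗ 1}` of a right
`H`-comodule algebra `A`. -/
def coinvariants (k H A : Type*) [Field k] [CommRing H] [HopfAlgebra k H]
    [CommRing A] [Algebra k A] (ρ : A →ₐ[k] A ⊗[k] H) : Subalgebra k A where
  carrier := {a | ρ a = a ⊗ₜ[k] 1}
  mul_mem' := by
    intro a b ha hb
    simp only [Set.mem_setOf_eq] at *
    rw [map_mul, ha, hb, Algebra.TensorProduct.tmul_mul_tmul, mul_one]
  one_mem' := by
    simp only [Set.mem_setOf_eq, map_one, Algebra.TensorProduct.one_def]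
  add_mem' := by
    intro a b ha hb
    simp only [Set.mem_setOf_eq] at *
    rw [map_add, ha, hb, TensorProduct.add_tmul]
  algebraMap_mem' := fun c => by
    simp only [Set.mem_setOf_eq, AlgHom.commutes, Algebra.TensorProduct.algebraMap_apply]

/-!
The averaging operator `t a = ∑ a₀ φ (S a₁)` takes values in `B` and is `B`-linear with
`t 1 = 1`, so `G = id_M ⊗ t : M ⊗_B A → M ⊗_B B = M` is a left inverse of `m ↦ m ⊗ 1`.
Coinvariance of `t a` comes from `Δ ∘ S = (S ⊗ S) ∘ τ ∘ Δ`, which turns the total integral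
property into `ρ (φ (S h)) = ∑ φ (S h₂) ⊗ S h₁`, together with `∑ ρ (a₀) (1 ⊗ S a₁) = a ⊗ 1`.
Conversely, the map `(M ⊗_B A) ⊗ H → M ⊗_B A`, `z ⊗ h ↦ (1 ⊗ φ (S h)) z`, sends `ρ' z` to
`G z ⊗ 1` and `x ⊗ 1` to `x`, so every coinvariant `x` equals `G x ⊗ 1`.
-/

open LinearMap Coalgebra HopfAlgebra WithConv

/- In the convolution group of algebra maps `H → H ⊗ H` we have `Δ = ι₁ * ι₂`, hence
`Δ ∘ S = Δ⁻¹ = ι₂⁻¹ * ι₁⁻¹ = (ι₂ ∘ S) * (ι₁ ∘ S)`. -/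
theorem HopfAlgebra.comul_antipode {k H : Type*} [CommSemiring k] [CommSemiring H]
    [HopfAlgebra k H] (h : H) :
    comul (R := k) (antipode k h) =
      map (antipode k) (antipode k) (TensorProduct.comm k H H (comul h)) := by
  let ι₁ : WithConv (H →ₐ[k] H ⊗[k] H) := toConv Algebra.TensorProduct.includeLeft
  let ι₂ : WithConv (H →ₐ[k] H ⊗[k] H) := toConv Algebra.TensorProduct.includeRight
  have hδ : toConv (Bialgebra.comulAlgHom k H) = ι₁ * ι₂ := by
    apply WithConv.ofConv_injective
    ext x
    simp [AlgHom.convMul_apply, ι₁, ι₂]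
  refine congr(($((congrArg (·⁻¹) hδ).trans (mul_inv_rev ι₁ ι₂))).ofConv h).trans ?_
  rw [AlgHom.convMul_apply]
  induction comul (R := k) h using TensorProduct.induction_on with
  | zero => simp
  | tmul x y =>
    change ((1 : H) ⊗ₜ[k] antipode k x) * (antipode k y ⊗ₜ[k] (1 : H)) = _
    simp
  | add x y hx hy => simp only [map_add, hx, hy]

theorem lTensor_mul'_comp_lTensor_assoc_tmul {k A H : Type*} [CommSemiring k] [Semiring A]
    [Algebra k A] [Semiring H] [Algebra k H] (f : H →ₗ[k] H) (w : A ⊗[k] H) (g : H) :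
    lTensor A (mul' k H ∘ₗ lTensor H f) (TensorProduct.assoc k A H H (w ⊗ₜ g)) =
      w * (1 ⊗ₜ f g) := by
  induction w using TensorProduct.induction_on with
  | zero => simp
  | tmul a h => simp
  | add w w' hw hw' => simp only [add_tmul, map_add, hw, hw', add_mul]

section ComoduleAlgebra

variable {k H A : Type*} [CommSemiring k] [CommSemiring H] [HopfAlgebra k H]
  [Semiring A] [Algebra k A] (ρ : A →ₐ[k] A ⊗[k] H)

theorem coaction_integral_antipode {φ : H →ₗ[k] A}
    (hφ : ρ.toLinearMap ∘ₗ φ = rTensor H φ ∘ₗ comul) (h : H) :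
    ρ (φ (antipode k h)) =
      map (φ ∘ₗ antipode k) (antipode k) (TensorProduct.comm k H H (comul h)) := by
  rw [← AlgHom.toLinearMap_apply, ← comp_apply, hφ, comp_apply, HopfAlgebra.comul_antipode,
    ← comp_apply (rTensor H φ), rTensor_comp_map]

theorem coaction_mul_antipode_coaction
    (hcoassoc : (TensorProduct.assoc k A H H).toLinearMap ∘ₗ
        rTensor H ρ.toLinearMap ∘ₗ ρ.toLinearMap = lTensor A (comul (R := k)) ∘ₗ ρ.toLinearMap)
    (hcounit : (TensorProduct.rid k A).toLinearMap ∘ₗ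
        lTensor A (counit (R := k)) ∘ₗ ρ.toLinearMap = LinearMap.id) (x : A) :
    mul' k (A ⊗[k] H)
      (map ρ.toLinearMap (Algebra.TensorProduct.includeRight.toLinearMap ∘ₗ antipode k) (ρ x)) =
      x ⊗ₜ 1 := by
  have hΔ : TensorProduct.assoc k A H H (rTensor H ρ.toLinearMap (ρ x)) =
      lTensor A comul (ρ x) := congr($hcoassoc x)
  have hε : lTensor A (counit (R := k)) (ρ x) = (TensorProduct.rid k A).symm x := by
    rw [LinearEquiv.eq_symm_apply]
    exact congr($hcounit x)
  have hκ : ∀ v : A ⊗[k] H, mul' k (A ⊗[k] H)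
      (map ρ.toLinearMap (Algebra.TensorProduct.includeRight.toLinearMap ∘ₗ antipode k) v) =
      lTensor A (mul' k H ∘ₗ lTensor H (antipode k))
        (TensorProduct.assoc k A H H (rTensor H ρ.toLinearMap v)) := by
    intro v
    induction v using TensorProduct.induction_on with
    | zero => simp
    | tmul y h => simp [lTensor_mul'_comp_lTensor_assoc_tmul]
    | add v v' hv hv' => simp only [map_add, hv, hv']
  rw [hκ, hΔ, ← comp_apply (lTensor A _), ← lTensor_comp, comp_assoc, mul_antipode_lTensor_comul,
    lTensor_comp, comp_apply, hε]
  simp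

def averaging (φ : H →ₗ[k] A) : A →ₗ[k] A :=
  mul' k A ∘ₗ lTensor A (φ ∘ₗ antipode k) ∘ₗ ρ.toLinearMap

theorem coaction_averaging {φ : H →ₗ[k] A}
    (hcoassoc : (TensorProduct.assoc k A H H).toLinearMap ∘ₗ
        rTensor H ρ.toLinearMap ∘ₗ ρ.toLinearMap = lTensor A (comul (R := k)) ∘ₗ ρ.toLinearMap)
    (hcounit : (TensorProduct.rid k A).toLinearMap ∘ₗ
        lTensor A (counit (R := k)) ∘ₗ ρ.toLinearMap = LinearMap.id)
    (hφ : ρ.toLinearMap ∘ₗ φ = rTensor H φ ∘ₗ comul) (a : A) :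
    ρ (averaging ρ φ a) = averaging ρ φ a ⊗ₜ 1 := by
  set ψ := φ ∘ₗ antipode k
  -- `Φ (x ⊗ (h ⊗ h')) = ρ x * (ψ h' ⊗ S h)`
  let Φ : A ⊗[k] (H ⊗[k] H) →ₗ[k] A ⊗[k] H := mul' k (A ⊗[k] H) ∘ₗ
    map ρ.toLinearMap (map ψ (antipode k) ∘ₗ (TensorProduct.comm k H H).toLinearMap)
  have hρψ : ρ.toLinearMap ∘ₗ mul' k A ∘ₗ lTensor A ψ = Φ ∘ₗ lTensor A comul := by
    ext x h
    simp [Φ, ψ, coaction_integral_antipode ρ hφ]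
  have hΦ : ∀ (v : A ⊗[k] H) (h : H), Φ (TensorProduct.assoc k A H H (v ⊗ₜ h)) =
      mul' k (A ⊗[k] H)
        (map ρ.toLinearMap (Algebra.TensorProduct.includeRight.toLinearMap ∘ₗ antipode k) v) *
        (ψ h ⊗ₜ 1) := by
    intro v h
    induction v using TensorProduct.induction_on with
    | zero => simp
    | tmul y h' => simp [Φ, mul_assoc]
    | add v v' hv hv' => simp only [add_tmul, map_add, hv, hv', add_mul]
  have hΔ : TensorProduct.assoc k A H H (rTensor H ρ.toLinearMap (ρ a)) =
      lTensor A comul (ρ a) := congr($hcoassoc a)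
  calc ρ (averaging ρ φ a) = Φ (lTensor A comul (ρ a)) := congr($hρψ (ρ a))
    _ = Φ (TensorProduct.assoc k A H H (rTensor H ρ.toLinearMap (ρ a))) := by rw [hΔ]
    _ = averaging ρ φ a ⊗ₜ 1 := by
      simp only [averaging, comp_apply, AlgHom.toLinearMap_apply]
      induction ρ a using TensorProduct.induction_on with
      | zero => simp
      | tmul x h =>
        rw [rTensor_tmul, AlgHom.toLinearMap_apply, hΦ,
          coaction_mul_antipode_coaction ρ hcoassoc hcounit]
        simp [ψ]
      | add u u' hu hu' => simp only [map_add, hu, hu', add_tmul]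

theorem averaging_one {φ : H →ₗ[k] A} (hφ1 : φ 1 = 1) : averaging ρ φ 1 = 1 := by
  simp [averaging, Algebra.TensorProduct.one_def, hφ1]

theorem averaging_mul_of_coaction_eq (φ : H →ₗ[k] A) {b : A} (hb : ρ b = b ⊗ₜ 1) (a : A) :
    averaging ρ φ (b * a) = b * averaging ρ φ a := by
  simp only [averaging, comp_apply, AlgHom.toLinearMap_apply, map_mul, hb]
  induction ρ a using TensorProduct.induction_on with
  | zero => simp
  | tmul x h => simp [mul_assoc]
  | add u u' hu hu' => simp only [mul_add, map_add, hu, hu']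

end ComoduleAlgebra

section BaseChange

variable {k B A H M : Type*} [CommSemiring k] [CommSemiring B] [CommSemiring A] [Algebra B A]
  [AddCommMonoid M] [Module B M]

theorem tmul_one_injective_of_retraction (T : A →ₗ[B] B) (hT : T 1 = 1) :
    Function.Injective (fun m : M => m ⊗ₜ[B] (1 : A)) :=
  Function.LeftInverse.injective (g := TensorProduct.rid B M ∘ₗ lTensor M T) fun m => by simp [hT]

variable [Algebra k B] [Algebra k A] [IsScalarTower k B A] [Module k M] [IsScalarTower k B M]
  [SMulCommClass B k M] [CommSemiring H] [Algebra k H]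

def lTensorMulLeft (ψ : H →ₗ[k] A) : (M ⊗[B] A) ⊗[k] H →ₗ[k] M ⊗[B] A :=
  TensorProduct.lift (LinearMap.flip (restrictScalarsₗ k B (M ⊗[B] A) (M ⊗[B] A) k ∘ₗ
    ((lTensorHom M ∘ₗ LinearMap.mul B A).restrictScalars k) ∘ₗ ψ))

theorem lTensorMulLeft_tmul (ψ : H →ₗ[k] A) (z : M ⊗[B] A) (h : H) :
    lTensorMulLeft ψ (z ⊗ₜ h) = lTensor M (mulLeft B (ψ h)) z := rfl

theorem eq_tmul_one_of_coaction_eq {ρ : A →ₗ[k] A ⊗[k] H} {ψ : H →ₗ[k] A} (hψ : ψ 1 = 1)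
    {T : A →ₗ[B] B} (hT : ∀ a, algebraMap B A (T a) = mul' k A (lTensor A ψ (ρ a)))
    {ρ' : M ⊗[B] A →ₗ[k] (M ⊗[B] A) ⊗[k] H}
    (hρ' : ∀ m a, ρ' (m ⊗ₜ a) = rTensor H ((TensorProduct.mk B M A m).restrictScalars k) (ρ a))
    {x : M ⊗[B] A} (hx : ρ' x = x ⊗ₜ 1) :
    x = TensorProduct.rid B M (lTensor M T x) ⊗ₜ 1 := by
  have hF1 : ∀ z : M ⊗[B] A, lTensorMulLeft ψ (z ⊗ₜ 1) = z := by
    simp [lTensorMulLeft_tmul, hψ]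
  have hFmk : ∀ m : M,
      lTensorMulLeft ψ ∘ₗ rTensor H ((TensorProduct.mk B M A m).restrictScalars k) =
        (TensorProduct.mk B M A m).restrictScalars k ∘ₗ mul' k A ∘ₗ lTensor A ψ := by
    intro m
    ext y h
    simp [lTensorMulLeft_tmul, mul_comm]
  have hFρ' : ∀ z, lTensorMulLeft ψ (ρ' z) = TensorProduct.rid B M (lTensor M T z) ⊗ₜ 1 := by
    intro z
    induction z using TensorProduct.induction_on with
    | zero => simp
    | tmul m a =>
      rw [hρ', ← comp_apply, hFmk]
      simp [← hT, Algebra.algebraMap_eq_smul_one, smul_tmul]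
    | add z z' hz hz' => simp only [map_add, hz, hz', add_tmul]
  rw [← hFρ', hx, hF1]

end BaseChange

def averagingCoinvariants {k H A : Type*} [Field k] [CommRing H] [HopfAlgebra k H] [CommRing A]
    [Algebra k A] (ρ : A →ₐ[k] A ⊗[k] H) {φ : H →ₗ[k] A}
    (hcoassoc : (TensorProduct.assoc k A H H).toLinearMap ∘ₗ
        rTensor H ρ.toLinearMap ∘ₗ ρ.toLinearMap = lTensor A (comul (R := k)) ∘ₗ ρ.toLinearMap)
    (hcounit : (TensorProduct.rid k A).toLinearMap ∘ₗ
        lTensor A (counit (R := k)) ∘ₗ ρ.toLinearMap = LinearMap.id)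
    (hφ : ρ.toLinearMap ∘ₗ φ = rTensor H φ ∘ₗ comul) :
    A →ₗ[coinvariants k H A ρ] coinvariants k H A ρ where
  toFun a := ⟨averaging ρ φ a, coaction_averaging ρ hcoassoc hcounit hφ a⟩
  map_add' a a' := Subtype.ext (map_add _ a a')
  map_smul' b a := Subtype.ext (averaging_mul_of_coaction_eq ρ φ b.2 a)

/-- Let `H` be a commutative Hopf algebra over a field `k`, `A` a right `H`-comodule algebra
with structure map `ρ : A → A ⊗ H` and coinvariant subalgebra `B = A^{coH}`, and suppose
there is a total integral `φ : H → A`.  Then for every `B`-module `M`, the map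
`M → (M ⊗_B A)^{coH}`, `m ↦ m ⊗ 1`, is an isomorphism (of `B`-modules):
it lands in the coinvariants of the induced coaction `ρ'` on `M ⊗_B A`, is injective,
and hits every coinvariant element. -/
theorem stmt11 (k H A : Type*) [Field k] [CommRing H] [HopfAlgebra k H]
    [CommRing A] [Algebra k A] (ρ : A →ₐ[k] A ⊗[k] H)
    (hcoassoc : (TensorProduct.assoc k A H H).toLinearMap ∘ₗ
        (LinearMap.rTensor H ρ.toLinearMap) ∘ₗ ρ.toLinearMap
      = (LinearMap.lTensor A (Coalgebra.comul (R := k))) ∘ₗ ρ.toLinearMap)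
    (hcounit : (TensorProduct.rid k A).toLinearMap ∘ₗ
        (LinearMap.lTensor A (Coalgebra.counit (R := k))) ∘ₗ ρ.toLinearMap = LinearMap.id)
    (φ : H →ₗ[k] A) (hφ1 : φ 1 = 1)
    (hφ : ρ.toLinearMap ∘ₗ φ = (LinearMap.rTensor H φ) ∘ₗ (Coalgebra.comul (R := k)))
    (M : Type*) [AddCommGroup M] [Module k M]
    [Module ↥(coinvariants k H A ρ) M] [IsScalarTower k ↥(coinvariants k H A ρ) M]
    [SMulCommClass ↥(coinvariants k H A ρ) k M]
    (ρ' : M ⊗[↥(coinvariants k H A ρ)] A →ₗ[k]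
        (M ⊗[↥(coinvariants k H A ρ)] A) ⊗[k] H)
    (hρ' : ∀ (m : M) (a : A),
        ρ' (m ⊗ₜ a) =
          (LinearMap.rTensor H
            (((TensorProduct.mk ↥(coinvariants k H A ρ) M A) m).restrictScalars k)) (ρ a)) :
    (∀ m : M, ρ' (m ⊗ₜ (1 : A)) = (m ⊗ₜ (1 : A)) ⊗ₜ (1 : H)) ∧
    Function.Injective
      (fun m : M => (m ⊗ₜ (1 : A) : M ⊗[↥(coinvariants k H A ρ)] A)) ∧
    (∀ x : M ⊗[↥(coinvariants k H A ρ)] A,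
      ρ' x = x ⊗ₜ (1 : H) → ∃ m : M, m ⊗ₜ (1 : A) = x) := by
  set T := averagingCoinvariants ρ hcoassoc hcounit hφ
  have hT1 : T 1 = 1 := Subtype.ext (averaging_one ρ hφ1)
  refine ⟨fun m => ?_, tmul_one_injective_of_retraction T hT1, fun x hx => ?_⟩
  · rw [hρ', map_one, Algebra.TensorProduct.one_def, rTensor_tmul]
    rfl
  · have hψ : (φ ∘ₗ antipode k) 1 = 1 := by simp [hφ1]
    exact ⟨_, (eq_tmul_one_of_coaction_eq hψ (T := T) (fun a => rfl) hρ' hx).symm⟩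
end
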